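/- In the identification graph arising from an acyclic redex of an acyclic solos term, the input solo e₁ and the output solo e₂ satisfy: (i) if x has an R-occurrence in e₁ then all its other occurrences in e₁ and e₂ are S-occurrences in e₁; (ii) if x has an R-occurrence in e₂ then x has no other occurrence in e₁ or e₂; (iii) if x has an S-occurrence in e₂ then x has no R-occurrence in e₁ or e₂. -/
import Mathlib


/-- Communication protocols carried by object occurrences: Send and Receive. -/
inductive Proto : Type
  | S : Proto
  | R : Proto
deriving DecidableEq

/-- A (protocol-decorated) triadic solo: a polarity (`inp = true` for input),
a subject name and three object names each decorated with a protocol. -/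
structure Solo where
  inp : Bool
  subj : ℕ
  objs : Fin 3 → ℕ × Proto
deriving DecidableEq

/-- A solos term in canonical form: a finite set of restricted (bound) names
together with a multiset of solos in parallel. -/
structure CTerm where
  bound : Finset ℕ
  solos : Multiset Solo

/-- `x` has an object occurrence in `s`. -/
def Solo.objOcc (s : Solo) (x : ℕ) : Prop := ∃ i, (s.objs i).1 = x

/-- `x` has an `R`-occurrence in `s` (written `s ◁ x`). -/
def Solo.hasR (s : Solo) (x : ℕ) : Prop := ∃ i, s.objs i = (x, Proto.R)

/-- `x` has an `S`-occurrence in `s`. -/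
def Solo.hasS (s : Solo) (x : ℕ) : Prop := ∃ i, s.objs i = (x, Proto.S)

/-- `s ◁ t` : the subject of `t` has an `R`-occurrence in `s`. -/
def Solo.ltS (s t : Solo) : Prop := s.hasR t.subj

/-- Dual solos: same subject, opposite polarities. -/
def Dual (s t : Solo) : Prop := s.subj = t.subj ∧ s.inp ≠ t.inp

/-- `s` is a root of `P`: no solo `t` of `P` satisfies `t ◁ s`. -/
def CTerm.IsRoot (P : CTerm) (s : Solo) : Prop := ∀ t ∈ P.solos, ¬ t.ltS s

/-- The relation `◁` restricted to the solos of `P`. -/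
def CTerm.lt (P : CTerm) (s t : Solo) : Prop :=
  s ∈ P.solos ∧ t ∈ P.solos ∧ s.ltS t

/-- The number of `R`-occurrences of the name `x` in `P`. -/
def CTerm.Rocc (P : CTerm) (x : ℕ) : ℕ :=
  (P.solos.map
    (fun s => (Finset.univ.filter (fun i => s.objs i = (x, Proto.R))).card)).sum

/-- (AC1): each name has at most one `R`-occurrence. -/
def AC1 (P : CTerm) : Prop := ∀ x : ℕ, P.Rocc x ≤ 1

/-- (AC2): two dual solos are both roots. -/
def AC2 (P : CTerm) : Prop :=
  ∀ s ∈ P.solos, ∀ t ∈ P.solos, Dual s t → P.IsRoot s ∧ P.IsRoot t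

/-- (AC3): `s ◁ x` and `x` occurring as object in `t` implies `s ◁* t`. -/
def AC3 (P : CTerm) : Prop :=
  ∀ s ∈ P.solos, ∀ t ∈ P.solos, ∀ x : ℕ,
    s.hasR x → t.objOcc x → Relation.ReflTransGen P.lt s t

/-- (AC4): a solo with both an `S`- and an `R`-occurrence of a name is an input. -/
def AC4 (P : CTerm) : Prop :=
  ∀ s ∈ P.solos, ∀ x : ℕ, s.hasS x → s.hasR x → s.inp = true

/-- (AC5): no free name has an `R`-occurrence. -/
def AC5 (P : CTerm) : Prop :=
  ∀ x : ℕ, x ∉ P.bound → ∀ s ∈ P.solos, ¬ s.hasR x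

/-- Acyclic solos terms: conditions (AC1)–(AC5). -/
def Acyclic (P : CTerm) : Prop := AC1 P ∧ AC2 P ∧ AC3 P ∧ AC4 P ∧ AC5 P

/-- Applying a name substitution to a solo (protocols are preserved). -/
def applySub (σ : ℕ → ℕ) (s : Solo) : Solo :=
  ⟨s.inp, σ s.subj, fun i => (σ (s.objs i).1, (s.objs i).2)⟩

/-- `MguData σ s0 t0 P` : `σ` is a most general unifier of the objects of the
dual solos `s0` and `t0`, modifying only bound names of `P`. -/
def MguData (σ : ℕ → ℕ) (s0 t0 : Solo) (P : CTerm) : Prop :=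
  (∀ i, σ (s0.objs i).1 = σ (t0.objs i).1) ∧
  (∀ w, σ w ≠ w → w ∈ P.bound) ∧
  (∀ w, σ (σ w) = σ w) ∧
  (∀ τ : ℕ → ℕ, (∀ i, τ (s0.objs i).1 = τ (t0.objs i).1) → ∀ w, τ (σ w) = τ w)

/-- One reduction step of the solos calculus in canonical form: two dual solos
`s0` and `t0` of `P` are erased and a most general unifier of their objects,
modifying only bound names, is applied to the remaining solos (the residues). -/
def Reduces (P Q : CTerm) : Prop :=
  ∃ (s0 t0 : Solo) (σ : ℕ → ℕ),
    s0 ∈ P.solos ∧ t0 ∈ P.solos.erase s0 ∧ Dual s0 t0 ∧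
    MguData σ s0 t0 P ∧
    Q.solos = ((P.solos.erase s0).erase t0).map (applySub σ) ∧
    Q.bound = P.bound.filter (fun w => σ w = w)

lemma root_eq {P : CTerm} {s t : Solo} (h : Relation.ReflTransGen P.lt s t)
    (hroot : P.IsRoot t) : s = t := by
  rcases h.cases_tail with h | ⟨c, _, hc⟩
  · exact h.symm
  · exact absurd hc.2.2 (hroot c hc.1)

lemma rocc_two {P : CTerm} {e : Solo} (he : e ∈ P.solos) {x : ℕ} {i j : Fin 3}
    (hij : i ≠ j) (hi : e.objs i = (x, Proto.R)) (hj : e.objs j = (x, Proto.R)) :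
    2 ≤ P.Rocc x := by
  have hmem : (Finset.univ.filter (fun k => e.objs k = (x, Proto.R))).card ∈
      (P.solos.map (fun s =>
        (Finset.univ.filter (fun k => s.objs k = (x, Proto.R))).card)) :=
    Multiset.mem_map_of_mem _ he
  have h2 : 1 < (Finset.univ.filter (fun k => e.objs k = (x, Proto.R))).card :=
    Finset.one_lt_card.mpr ⟨i, by simp [hi], j, by simp [hj], hij⟩
  exact le_trans h2 (Multiset.single_le_sum (fun _ _ => Nat.zero_le _) _ hmem)

/-- Properties of the occurrences of names in an acyclic redex,
formed by an input solo `e1` and a dual output solo `e2` of an acyclic solos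
term `P`:
(i) an `R`-occurrence of `x` in `e1` forces every other occurrence of `x` in
`e1` or `e2` to be an `S`-occurrence located in `e1`;
(ii) an `R`-occurrence of `x` in `e2` forbids any other occurrence of `x` in
`e1` or `e2`;
(iii) an `S`-occurrence of `x` in `e2` forbids any `R`-occurrence of `x` in
`e1` or `e2`. -/
theorem stmt18 (P : CTerm) (hP : Acyclic P)
    (e1 e2 : Solo) (he1 : e1 ∈ P.solos) (he2 : e2 ∈ P.solos)
    (hsubj : e1.subj = e2.subj) (hin : e1.inp = true) (hout : e2.inp = false) :
    (∀ x : ℕ, e1.hasR x →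
      (¬ e2.objOcc x ∧
        ∀ i j : Fin 3, e1.objs i = (x, Proto.R) → j ≠ i →
          (e1.objs j).1 = x → e1.objs j = (x, Proto.S))) ∧
    (∀ x : ℕ, e2.hasR x →
      (¬ e1.objOcc x ∧
        ∀ i j : Fin 3, e2.objs i = (x, Proto.R) → j ≠ i →
          (e2.objs j).1 ≠ x)) ∧
    (∀ x : ℕ, e2.hasS x → ¬ e1.hasR x ∧ ¬ e2.hasR x) := by
  obtain ⟨hAC1, hAC2, hAC3, hAC4, _⟩ := hP
  have hne : e1 ≠ e2 := fun h => by rw [h, hout] at hin; exact Bool.noConfusion hin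
  obtain ⟨hroot1, hroot2⟩ := hAC2 e1 he1 e2 he2
    ⟨hsubj, by rw [hin, hout]; exact fun h => Bool.noConfusion h⟩
  have key12 : ∀ x, e1.hasR x → ¬ e2.objOcc x := fun x hR hOcc =>
    hne (root_eq (hAC3 e1 he1 e2 he2 x hR hOcc) hroot2)
  have key21 : ∀ x, e2.hasR x → ¬ e1.objOcc x := fun x hR hOcc =>
    hne.symm (root_eq (hAC3 e2 he2 e1 he1 x hR hOcc) hroot1)
  refine ⟨?_, ?_, ?_⟩
  · intro x hR
    refine ⟨key12 x hR, ?_⟩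
    intro i j hi hji hj
    rcases hp : e1.objs j with ⟨y, p⟩
    have hy : y = x := by rw [hp] at hj; exact hj
    rw [hy] at hp
    cases p with
    | S => rw [hy]
    | R => exact absurd (hAC1 x) (by
        have := rocc_two he1 (Ne.symm hji) hi hp; omega)
  · intro x hR
    refine ⟨key21 x hR, ?_⟩
    intro i j hi hji hj
    rcases hp : e2.objs j with ⟨y, p⟩
    have hy : y = x := by rw [hp] at hj; exact hj
    rw [hy] at hp
    cases p with
    | S =>
        have : e2.inp = true := hAC4 e2 he2 x ⟨j, hp⟩ ⟨i, hi⟩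
        rw [hout] at this; exact Bool.noConfusion this
    | R => exact absurd (hAC1 x) (by
        have := rocc_two he2 (Ne.symm hji) hi hp; omega)
  · intro x hS
    constructor
    · intro hR
      obtain ⟨i, hi⟩ := hS
      exact key12 x hR ⟨i, by rw [hi]⟩
    · intro hR
      have : e2.inp = true := hAC4 e2 he2 x hS hR
      rw [hout] at this; exact Bool.noConfusion this
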